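/- Let f_1, …, f_N ∈ C(X) be nonnegative continuous functions on a compact Hausdorff space X acting on H, and A_1, …, A_N local operators. Then the norm of the symbol σ(Σ f_j A_j) in A/K(H) is at most (max_{x∈X} Σ_j f_j(x)) · max_j ‖A_j restricted to the subspace of elements supported in supp f_j‖. -/

import Mathlib

/-! The symbol of `Σ f_j A_j` agrees with that of `S = Σ g_j A_j g_j`, `g_j = √f_j`, since `A_j`
commutes with `g_j` modulo compacts. Testing `S v` against `w`,
`|⟪S v, w⟫| ≤ Σ_j |⟪A_j g_j v, g_j w⟫| ≤ m Σ_j ‖g_j v‖ ‖g_j w‖` with `m = max_j ‖A_j‖_{supp f_j}`,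
and by Cauchy–Schwarz and `Σ_j ‖g_j v‖² = ⟪(Σ_j f_j) v, v⟫ ≤ M ‖v‖²` this is at most
`M m ‖v‖ ‖w‖`, where `M = max_x Σ_j f_j(x)`. -/

open Filter Topology

section Localization

variable {X : Type*} [TopologicalSpace X] [CompactSpace X] [T2Space X]
variable {H : Type*} [NormedAddCommGroup H] [InnerProductSpace ℂ H] [CompleteSpace H]

/-- The complexification of a real-valued continuous function. -/
def toCC {X : Type*} [TopologicalSpace X] (φ : C(X, ℝ)) : C(X, ℂ) :=
  ⟨fun x => (φ x : ℂ), Complex.continuous_ofReal.comp φ.continuous⟩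

/-- The localizing class `F_x` at a point `x`: continuous functions with values in `[0,1]`
equal to `1` in a neighborhood of `x`. -/
def locClass (x : X) : Set C(X, ℝ) :=
  {φ | (∀ y, φ y ∈ Set.Icc (0:ℝ) 1) ∧ ∃ U ∈ 𝓝 x, ∀ y ∈ U, φ y = 1}

variable (π : C(X, ℂ) →⋆ₐ[ℂ] (H →L[ℂ] H))

/-- The C*-algebra `𝒜` of local operators: bounded operators commuting with the
action of every `φ ∈ C(X)` modulo compact operators. -/
def localOps : Set (H →L[ℂ] H) :=
  {T | ∀ φ : C(X, ℂ), IsCompactOperator ⇑(T ∘L π φ - π φ ∘L T)}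

/-- The closed two-sided ideal `J_x` of `𝒜` generated by the functions vanishing at `x`. -/
def Jloc (x : X) : Set (H →L[ℂ] H) :=
  closure {T | ∃ (n : ℕ) (A B : Fin n → H →L[ℂ] H) (φ : Fin n → C(X, ℂ)),
    (∀ i, A i ∈ localOps π) ∧ (∀ i, B i ∈ localOps π) ∧ (∀ i, φ i x = 0) ∧
    T = ∑ i, (A i) ∘L (π (φ i)) ∘L (B i)}

/-- The representation of `C(X)` is faithful and meets the compact operators trivially. -/
def FaithfulNoCompact : Prop :=
  Function.Injective π ∧ ∀ φ : C(X, ℂ), IsCompactOperator ⇑(π φ) → φ = 0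

/-- Each localizing class `F_x`, directed by `φ ≺ ψ ↔ φψ = ψ`, converges strongly to `0`. -/
def LocStrongConv : Prop :=
  ∀ (x : X) (v : H) (ε : ℝ), 0 < ε →
    ∃ φ ∈ locClass x, ∀ ψ ∈ locClass x, φ * ψ = ψ → ‖π (toCC ψ) v‖ < ε

end Localization

section LocalNorms

variable {X : Type*} [TopologicalSpace X] [CompactSpace X] [T2Space X]
variable {H : Type*} [NormedAddCommGroup H] [InnerProductSpace ℂ H] [CompleteSpace H]
variable (π : C(X, ℂ) →⋆ₐ[ℂ] (H →L[ℂ] H))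

/-- The subspace `H_Q ⊆ H` of vectors supported in the closure of `Q ⊆ X`:
those fixed by multiplication by any continuous function equal to `1` on a
neighborhood of the closure of `Q`. -/
def suppSubspace (Q : Set X) : Set H :=
  {v | ∀ φ : C(X, ℝ), (∃ U : Set X, IsOpen U ∧ closure Q ⊆ U ∧ ∀ y ∈ U, φ y = 1) →
    π (toCC φ) v = v}

/-- The local norm `‖B‖_Q`: the norm of the restriction of `B` to the subspace of
vectors supported in the closure of `Q`. -/
noncomputable def normOn (B : H →L[ℂ] H) (Q : Set X) : ℝ :=
  sSup {r | ∃ v ∈ suppSubspace π Q, ‖v‖ ≤ 1 ∧ r = ‖B v‖}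

end LocalNorms

theorem sum_norm_mul_norm_le_of_sum_norm_sq_le {ι E F : Type*} [SeminormedAddCommGroup E]
    [SeminormedAddCommGroup F] (s : Finset ι) {G : ι → E → F} {M : ℝ} (hM : 0 ≤ M)
    (hG : ∀ v, ∑ j ∈ s, ‖G j v‖ ^ 2 ≤ M * ‖v‖ ^ 2) (v w : E) :
    ∑ j ∈ s, ‖G j v‖ * ‖G j w‖ ≤ M * ‖v‖ * ‖w‖ := by
  have hsqrt : ∀ u, √(∑ j ∈ s, ‖G j u‖ ^ 2) ≤ √M * ‖u‖ := fun u => by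
    rw [← Real.sqrt_sq (norm_nonneg u), ← Real.sqrt_mul hM]
    exact Real.sqrt_le_sqrt (hG u)
  calc ∑ j ∈ s, ‖G j v‖ * ‖G j w‖
      ≤ √(∑ j ∈ s, ‖G j v‖ ^ 2) * √(∑ j ∈ s, ‖G j w‖ ^ 2) := Real.sum_mul_le_sqrt_mul_sqrt _ _ _
    _ ≤ (√M * ‖v‖) * (√M * ‖w‖) := by gcongr <;> exact hsqrt _
    _ = M * ‖v‖ * ‖w‖ := by
      rw [mul_mul_mul_comm, Real.mul_self_sqrt hM, mul_assoc]

namespace ContinuousLinearMap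

variable {𝕜 E F ι : Type*} [RCLike 𝕜] [NormedAddCommGroup E] [InnerProductSpace 𝕜 E]
  [CompleteSpace E] [NormedAddCommGroup F] [InnerProductSpace 𝕜 F] [CompleteSpace F]

theorem norm_sum_adjoint_comp_comp_le (s : Finset ι) {G : ι → E →L[𝕜] F} {B : ι → F →L[𝕜] F}
    {M m : ℝ} (hM : 0 ≤ M) (hm : 0 ≤ m) (hG : ∀ v, ∑ j ∈ s, ‖G j v‖ ^ 2 ≤ M * ‖v‖ ^ 2)
    (hB : ∀ j ∈ s, ∀ v, ‖B j (G j v)‖ ≤ m * ‖G j v‖) :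
    ‖∑ j ∈ s, adjoint (G j) ∘L B j ∘L G j‖ ≤ M * m := by
  refine opNorm_le_bound _ (mul_nonneg hM hm) fun v => ?_
  set w := (∑ j ∈ s, adjoint (G j) ∘L B j ∘L G j) v
  have hw : ‖w‖ ^ 2 ≤ M * m * ‖v‖ * ‖w‖ :=
    calc ‖w‖ ^ 2 = RCLike.re (inner 𝕜 w w) := (inner_self_eq_norm_sq w).symm
      _ = ∑ j ∈ s, RCLike.re (inner 𝕜 (B j (G j v)) (G j w)) := by
        simp only [w, sum_apply, sum_inner, map_sum, comp_apply, adjoint_inner_left]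
      _ ≤ ∑ j ∈ s, m * ‖G j v‖ * ‖G j w‖ := Finset.sum_le_sum fun j hj =>
        (re_inner_le_norm _ _).trans (by gcongr; exact hB j hj v)
      _ = m * ∑ j ∈ s, ‖G j v‖ * ‖G j w‖ := by simp only [Finset.mul_sum, mul_assoc]
      _ ≤ m * (M * ‖v‖ * ‖w‖) := by
        gcongr; exact sum_norm_mul_norm_le_of_sum_norm_sq_le s hM hG v w
      _ = M * m * ‖v‖ * ‖w‖ := by ring
  have : 0 ≤ M * m * ‖v‖ := by positivity
  nlinarith [norm_nonneg w]

end ContinuousLinearMap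

theorem infDist_compactOperators_le_norm {𝕜 E F : Type*} [NontriviallyNormedField 𝕜]
    [NormedAddCommGroup E] [NormedSpace 𝕜 E] [NormedAddCommGroup F] [NormedSpace 𝕜 F]
    {T S : E →L[𝕜] F} (h : IsCompactOperator ⇑(T - S)) :
    Metric.infDist T {K : E →L[𝕜] F | IsCompactOperator ⇑K} ≤ ‖S‖ := by
  simpa [dist_eq_norm] using
    Metric.infDist_le_dist_of_mem (x := T) (s := {K : E →L[𝕜] F | IsCompactOperator ⇑K}) h

theorem ContinuousMap.exists_mul_self_eq_of_nonneg {X : Type*} [TopologicalSpace X]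
    {f : C(X, ℝ)} (hf : ∀ x, 0 ≤ f x) : ∃ g : C(X, ℝ), g * g = f :=
  ⟨⟨fun x => √(f x), by fun_prop⟩, by ext x; exact Real.mul_self_sqrt (hf x)⟩

section toCC

variable {X : Type*} [TopologicalSpace X]

theorem toCC_mul (φ ψ : C(X, ℝ)) : toCC (φ * ψ) = toCC φ * toCC ψ := by
  ext x; simp [toCC]

theorem toCC_sum {ι : Type*} (s : Finset ι) (φ : ι → C(X, ℝ)) :
    toCC (∑ j ∈ s, φ j) = ∑ j ∈ s, toCC (φ j) := by
  ext x; simp [toCC]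

theorem isSelfAdjoint_toCC (φ : C(X, ℝ)) : IsSelfAdjoint (toCC φ) := by
  ext x; simp [toCC]

theorem norm_toCC_le_iSup [CompactSpace X] {φ : C(X, ℝ)} (hφ : ∀ x, 0 ≤ φ x) :
    ‖toCC φ‖ ≤ ⨆ x, φ x := by
  have hbdd : BddAbove (Set.range φ) := (isCompact_range φ.continuous).bddAbove
  refine (ContinuousMap.norm_le _ (Real.iSup_nonneg hφ)).2 fun x => ?_
  simpa [toCC, abs_of_nonneg (hφ x)] using le_ciSup hbdd x

end toCC

section LocalNormEstimates

variable {X : Type*} [TopologicalSpace X]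
variable {H : Type*} [NormedAddCommGroup H] [InnerProductSpace ℂ H] [CompleteSpace H]
variable (π : C(X, ℂ) →⋆ₐ[ℂ] (H →L[ℂ] H))

theorem isSelfAdjoint_map_toCC (φ : C(X, ℝ)) : IsSelfAdjoint (π (toCC φ)) :=
  (isSelfAdjoint_toCC φ).map π

theorem sum_norm_map_toCC_apply_sq_le [CompactSpace X] {ι : Type*} (s : Finset ι)
    (g : ι → C(X, ℝ)) (v : H) :
    ∑ j ∈ s, ‖π (toCC (g j)) v‖ ^ 2 ≤ ‖toCC (∑ j ∈ s, g j * g j)‖ * ‖v‖ ^ 2 := by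
  have hsq : ∀ j, ‖π (toCC (g j)) v‖ ^ 2 = RCLike.re (inner ℂ (π (toCC (g j * g j)) v) v) := by
    intro j
    rw [← inner_self_eq_norm_sq (𝕜 := ℂ), toCC_mul, map_mul, mul_apply_eq_comp]
    exact congrArg _ ((isSelfAdjoint_map_toCC π (g j)).isSymmetric _ _).symm
  calc ∑ j ∈ s, ‖π (toCC (g j)) v‖ ^ 2
      = RCLike.re (inner ℂ (π (toCC (∑ j ∈ s, g j * g j)) v) v) := by
        simp only [hsq, toCC_sum, map_sum, sum_apply, sum_inner]
    _ ≤ ‖π (toCC (∑ j ∈ s, g j * g j)) v‖ * ‖v‖ := re_inner_le_norm _ _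
    _ ≤ ‖toCC (∑ j ∈ s, g j * g j)‖ * ‖v‖ * ‖v‖ := by
        gcongr
        exact ((π _).le_opNorm v).trans (by gcongr; exact NonUnitalStarAlgHom.norm_apply_le π _)
    _ = ‖toCC (∑ j ∈ s, g j * g j)‖ * ‖v‖ ^ 2 := by ring

theorem map_toCC_apply_mem_suppSubspace (g : C(X, ℝ)) (v : H) :
    π (toCC g) v ∈ suppSubspace π (Function.support g) := by
  rintro φ ⟨U, -, hsub, hone⟩
  have hφg : φ * g = g := by
    ext y
    by_cases hy : g y = 0
    · simp [hy]
    · simp [hone y (hsub (subset_closure hy))]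
  rw [← mul_apply_eq_comp, ← map_mul, ← toCC_mul, hφg]

theorem bddAbove_normOn_set (B : H →L[ℂ] H) (Q : Set X) :
    BddAbove {r | ∃ v ∈ suppSubspace π Q, ‖v‖ ≤ 1 ∧ r = ‖B v‖} := by
  refine ⟨‖B‖, ?_⟩
  rintro r ⟨v, -, hv, rfl⟩
  simpa using B.le_of_opNorm_le le_rfl v |>.trans (mul_le_of_le_one_right B.opNorm_nonneg hv)

theorem normOn_nonneg (B : H →L[ℂ] H) (Q : Set X) : 0 ≤ normOn π B Q :=
  le_csSup (bddAbove_normOn_set π B Q) ⟨0, fun _ _ => by simp, by simp, by simp⟩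

theorem norm_apply_le_normOn (B : H →L[ℂ] H) (Q : Set X) {u : H}
    (hu : u ∈ suppSubspace π Q) : ‖B u‖ ≤ normOn π B Q * ‖u‖ := by
  rcases eq_or_ne u 0 with rfl | hne
  · simp
  have hpos : 0 < ‖u‖ := norm_pos_iff.mpr hne
  have hunit : (‖u‖⁻¹ : ℝ) • u ∈ suppSubspace π Q := fun φ hφ => by
    rw [ContinuousLinearMap.map_smul_of_tower, hu φ hφ]
  have hle : ‖u‖⁻¹ * ‖B u‖ ≤ normOn π B Q := by
    refine le_csSup (bddAbove_normOn_set π B Q) ⟨_, hunit, ?_, ?_⟩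
    · rw [norm_smul, norm_inv, norm_norm, inv_mul_cancel₀ hpos.ne']
    · rw [ContinuousLinearMap.map_smul_of_tower, norm_smul, norm_inv, norm_norm]
  rwa [inv_mul_le_iff₀ hpos, mul_comm] at hle

theorem isCompactOperator_map_mul_comp_sub_of_mem_localOps {A : H →L[ℂ] H}
    (hA : A ∈ localOps π) (φ : C(X, ℂ)) :
    IsCompactOperator ⇑(π (φ * φ) ∘L A - π φ ∘L A ∘L π φ) := by
  have h : π (φ * φ) ∘L A - π φ ∘L A ∘L π φ = π φ ∘L (-(A ∘L π φ - π φ ∘L A)) := by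
    ext v; simp
  rw [h, ContinuousLinearMap.coe_comp]
  exact (hA φ).neg.clm_comp (π φ)

end LocalNormEstimates

theorem symbol_norm_le_of_partition_general
    {X : Type*} [TopologicalSpace X] [CompactSpace X]
    {H : Type*} [NormedAddCommGroup H] [InnerProductSpace ℂ H] [CompleteSpace H]
    (π : C(X, ℂ) →⋆ₐ[ℂ] (H →L[ℂ] H))
    (N : ℕ) (f : Fin N → C(X, ℝ)) (hf : ∀ j y, 0 ≤ f j y)
    (A : Fin N → H →L[ℂ] H) (hA : ∀ j, A j ∈ localOps π) :
    Metric.infDist (∑ j, π (toCC (f j)) ∘L A j)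
        {S : H →L[ℂ] H | IsCompactOperator ⇑S} ≤
      (⨆ x : X, ∑ j, f j x) * ⨆ j, normOn π (A j) (Function.support (f j)) := by
  choose g hgg using fun j => ContinuousMap.exists_mul_self_eq_of_nonneg (hf j)
  set M := ⨆ x : X, ∑ j, f j x
  set m := ⨆ j, normOn π (A j) (Function.support (f j))
  have hM : 0 ≤ M := Real.iSup_nonneg fun x => Finset.sum_nonneg fun j _ => hf j x
  have hm : 0 ≤ m := Real.iSup_nonneg fun j => normOn_nonneg π _ _
  have hcompact : IsCompactOperator ⇑((∑ j, π (toCC (f j)) ∘L A j) -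
      ∑ j, (π (toCC (g j))).adjoint ∘L A j ∘L π (toCC (g j))) := by
    rw [← Finset.sum_sub_distrib]
    refine Submodule.sum_mem (compactOperator (RingHom.id ℂ) H H) fun j _ => ?_
    rw [(isSelfAdjoint_map_toCC π (g j)).adjoint_eq, ← hgg j, toCC_mul]
    exact isCompactOperator_map_mul_comp_sub_of_mem_localOps π (hA j) _
  have hG : ∀ v, ∑ j, ‖π (toCC (g j)) v‖ ^ 2 ≤ M * ‖v‖ ^ 2 := fun v => by
    have hF : ‖toCC (∑ j, g j * g j)‖ ≤ M := by
      simpa only [hgg, ContinuousMap.coe_sum, Finset.sum_apply] using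
        norm_toCC_le_iSup (φ := ∑ j, f j) fun x => by
          simpa using Finset.sum_nonneg fun j _ => hf j x
    exact (sum_norm_map_toCC_apply_sq_le π _ g v).trans (by gcongr)
  have hB : ∀ j ∈ Finset.univ, ∀ v,
      ‖A j (π (toCC (g j)) v)‖ ≤ m * ‖π (toCC (g j)) v‖ := fun j _ v => by
    have hsupp : Function.support (f j) = Function.support (g j) := by
      ext y; simp [← hgg j]
    have hmem := map_toCC_apply_mem_suppSubspace π (g j) v
    rw [← hsupp] at hmem
    refine (norm_apply_le_normOn π _ _ hmem).trans ?_
    gcongr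
    exact le_ciSup (f := fun j => normOn π (A j) (Function.support (f j)))
      (Set.finite_range _).bddAbove j
  calc _ ≤ ‖∑ j, (π (toCC (g j))).adjoint ∘L A j ∘L π (toCC (g j))‖ :=
        infDist_compactOperators_le_norm hcompact
    _ ≤ M * m := ContinuousLinearMap.norm_sum_adjoint_comp_comp_le _ hM hm hG hB

/-- (Local norm estimate, cf. Gohberg–Krupnik.) For nonnegative
`f₁, …, f_N ∈ C(X)` and local operators `A₁, …, A_N`, the norm of the symbol
`σ(Σ f_j A_j)` in `𝒜/K(H)` (the distance to the compact operators) is at most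
`(max_x Σ_j f_j(x)) ⬝ max_j ‖A_j‖_{supp f_j}`. -/
theorem symbol_norm_le_of_partition
    {X : Type*} [TopologicalSpace X] [CompactSpace X] [T2Space X]
    {H : Type*} [NormedAddCommGroup H] [InnerProductSpace ℂ H] [CompleteSpace H]
    (π : C(X, ℂ) →⋆ₐ[ℂ] (H →L[ℂ] H)) (hπ : FaithfulNoCompact π) (hconv : LocStrongConv π)
    (N : ℕ) (f : Fin N → C(X, ℝ)) (hf : ∀ j y, 0 ≤ f j y)
    (A : Fin N → H →L[ℂ] H) (hA : ∀ j, A j ∈ localOps π) :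
    Metric.infDist (∑ j, π (toCC (f j)) ∘L A j)
        {S : H →L[ℂ] H | IsCompactOperator ⇑S} ≤
      (⨆ x : X, ∑ j, f j x) * ⨆ j, normOn π (A j) (Function.support (f j)) :=
  symbol_norm_le_of_partition_general π N f hf A hA
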